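/- arXiv:2309.02831 — 2 statements merged into one kernel-verified Lean document; each statement's English description precedes it below -/
import Mathlib

section
/- Let R be a commutative ring with unity and x ∈ R. The set J_x is closed under multiplication (i.e., is a subsemigroup of the multiplicative semigroup of R) if and only if the principal ideal (x) is idempotent, i.e., (x) = (x)². -/
/-- The annihilator `Ann(x) = {y ∈ R | x * y = 0}` of an element `x` of a
commutative ring `R`, as an ideal of `R`. -/
def ann {R : Type*} [CommRing R] (x : R) : Ideal R where
  carrier := {y : R | x * y = 0}
  add_mem' := by
    intro a b ha hb
    simp only [Set.mem_setOf_eq] at *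
    rw [mul_add, ha, hb, add_zero]
  zero_mem' := by simp
  smul_mem' := by
    intro c y hy
    simp only [smul_eq_mul, Set.mem_setOf_eq] at *
    rw [mul_comm c y, ← mul_assoc, hy, zero_mul]

/-- `J_x = {xu : u ∈ R, [u] a unit of R/Ann(x)}`. -/
def Jset {R : Type*} [CommRing R] (x : R) : Set R :=
  {z : R | ∃ u : R, z = x * u ∧ IsUnit (Ideal.Quotient.mk (ann x) u)}

/-!
Two elements have the same class modulo `Ann(x)` exactly when `x` multiplies them to the same
element. Hence `x² = xw` with `[w]` a unit forces `[x] = [w]` to be a unit, and conversely if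
`[x]` is a unit then `(xu)(xv) = x · xuv` with `[xuv]` a unit. So `J_x` is closed under
multiplication iff `[x]` is a unit of `R/Ann(x)`, i.e. iff `x · xv = x` for some `v`, which says
`x² ∣ x`, i.e. `(x) ⊆ (x²) = (x)²`.
-/

theorem Ideal.span_singleton_eq_sq_iff_sq_dvd {R : Type*} [CommSemiring R] {x : R} :
    Ideal.span {x} = Ideal.span {x} ^ 2 ↔ x ^ 2 ∣ x := by
  rw [Ideal.span_singleton_pow, le_antisymm_iff, Ideal.span_singleton_le_span_singleton,
    Ideal.span_singleton_le_span_singleton]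
  exact and_iff_left (dvd_pow_self x two_ne_zero)

section Annihilator

open Ideal.Quotient

variable {R : Type*} [CommRing R] {x : R}

@[simp]
theorem mem_ann {y : R} : y ∈ ann x ↔ x * y = 0 := Iff.rfl

theorem mk_ann_eq_mk_ann_iff {a b : R} : mk (ann x) a = mk (ann x) b ↔ x * a = x * b := by
  rw [Ideal.Quotient.eq, mem_ann, mul_sub, sub_eq_zero]

theorem isUnit_mk_ann_iff {u : R} : IsUnit (mk (ann x) u) ↔ ∃ v, x * (u * v) = x := by
  rw [isUnit_iff_exists_inv, mk_surjective.exists]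
  simp only [← map_mul, ← map_one (mk (ann x)), mk_ann_eq_mk_ann_iff, mul_one]

theorem isUnit_mk_ann_self_iff_sq_dvd : IsUnit (mk (ann x) x) ↔ x ^ 2 ∣ x := by
  simp only [isUnit_mk_ann_iff, Dvd.dvd, sq, mul_assoc, eq_comm]

theorem self_mem_Jset : x ∈ Jset x :=
  ⟨1, (mul_one x).symm, by simp⟩

theorem isUnit_mk_ann_self_of_mul_self_mem_Jset (h : x * x ∈ Jset x) :
    IsUnit (mk (ann x) x) := by
  obtain ⟨w, hxw, hw⟩ := h
  rwa [mk_ann_eq_mk_ann_iff.mpr hxw]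

theorem mul_mem_Jset_of_isUnit_mk_ann_self (hx : IsUnit (mk (ann x) x)) {a b : R}
    (ha : a ∈ Jset x) (hb : b ∈ Jset x) : a * b ∈ Jset x := by
  obtain ⟨u, rfl, hu⟩ := ha
  obtain ⟨v, rfl, hv⟩ := hb
  refine ⟨x * (u * v), by ring, ?_⟩
  rw [map_mul, map_mul]
  exact hx.mul (hu.mul hv)

theorem Jset_mul_closed_iff_isUnit_mk_ann_self :
    (∀ a ∈ Jset x, ∀ b ∈ Jset x, a * b ∈ Jset x) ↔ IsUnit (mk (ann x) x) :=
  ⟨fun h => isUnit_mk_ann_self_of_mul_self_mem_Jset (h x self_mem_Jset x self_mem_Jset),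
    fun hx _ ha _ hb => mul_mem_Jset_of_isUnit_mk_ann_self hx ha hb⟩

end Annihilator

/-- `J_x` is closed under multiplication iff the principal ideal `(x)` is
idempotent, i.e. `(x) = (x)²`. -/
theorem Jset_mul_closed_iff_span_idempotent {R : Type*} [CommRing R] (x : R) :
    (∀ a ∈ Jset x, ∀ b ∈ Jset x, a * b ∈ Jset x) ↔
      Ideal.span {x} = Ideal.span {x} ^ 2 := by
  rw [Jset_mul_closed_iff_isUnit_mk_ann_self, isUnit_mk_ann_self_iff_sq_dvd,
    Ideal.span_singleton_eq_sq_iff_sq_dvd]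
end

section
/- Let S be a Dedekind domain, A an ideal of S, and R = S/A. Let e be an idempotent ideal of R (e² = e) with e = (x) for some x ∈ R, and let R_e = {y ∈ R : ε((y)) = e}. Then ⋂_{m≥1} R_e^m = {y ∈ R : (y) = e}, and this set is a group under the multiplication of R; hence each R_e is a stratified extension of a group, and the multiplicative semigroup of R is a semilattice of stratified extensions of groups. -/
/-!
Write `e = (ε)` with `ε` idempotent; the generators of `e` are then the units of the corner
ring `εR`, with identity `ε`. If `y` lies in every `R_e^m`, then `e = ε((y)) ≤ (y)`, and it
remains to show `(1 - ε) y = 0`. For `A ≠ 0` the ring `R` is Artinian, so every principal ideal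
`(z)` has an idempotent power, which lies in `ε((z)) = e` when `z ∈ R_e`; hence `(1 - ε) z` is
nilpotent and `(1 - ε) y`, a product of `m` such elements, lies in `nil(R)^m = 0` for large `m`.
For `A = 0` the ring `R ≅ S` is a domain, so `ε ∈ {0, 1}`; when `ε = 0` all factors are
nonunits, and a nonzero element of a Dedekind domain is not a product of arbitrarily many
nonunits.
-/

open Pointwise

/-- `eps I` is the sum (supremum) of all idempotent ideals of `R` contained in
the ideal `I`. -/
def eps {R : Type*} [CommRing R] (I : Ideal R) : Ideal R :=
  sSup {J : Ideal R | J * J = J ∧ J ≤ I}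

open UniqueFactorizationMonoid

section eps

variable {R : Type*} [CommRing R]

lemma eps_le (I : Ideal R) : eps I ≤ I :=
  sSup_le fun _ hJ => hJ.2

lemma le_eps {I J : Ideal R} (hJ : IsIdempotentElem J) (hJI : J ≤ I) : J ≤ eps I :=
  le_sSup ⟨hJ, hJI⟩

lemma eps_eq_self {I : Ideal R} (hI : IsIdempotentElem I) : eps I = I :=
  (eps_le I).antisymm (le_eps hI le_rfl)

end eps

namespace IsIdempotentElem

variable {R : Type*} [CommRing R] {ε : R}

lemma mem_span_singleton_iff (hε : IsIdempotentElem ε) {z : R} :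
    z ∈ Ideal.span {ε} ↔ ε * z = z := by
  refine ⟨fun hz => ?_, fun hz => Ideal.mem_span_singleton'.mpr ⟨z, by rw [mul_comm, hz]⟩⟩
  obtain ⟨c, rfl⟩ := Ideal.mem_span_singleton'.mp hz
  rw [mul_left_comm, hε.eq]

lemma mul_eq_self_of_span_singleton_eq (hε : IsIdempotentElem ε) {a : R}
    (ha : Ideal.span {a} = Ideal.span {ε}) : ε * a = a :=
  hε.mem_span_singleton_iff.mp (ha ▸ Ideal.mem_span_singleton_self a)

lemma exists_mul_eq_of_span_singleton_eq (hε : IsIdempotentElem ε) {a : R}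
    (ha : Ideal.span {a} = Ideal.span {ε}) :
    ∃ b, Ideal.span {b} = Ideal.span {ε} ∧ a * b = ε := by
  obtain ⟨c, hc⟩ := Ideal.mem_span_singleton'.mp (ha ▸ Ideal.mem_span_singleton_self ε)
  have hab : a * (c * ε) = ε := by rw [mul_left_comm, ← mul_assoc, hc, hε.eq]
  refine ⟨c * ε, le_antisymm ?_ ?_, hab⟩
  · exact Ideal.span_singleton_le_span_singleton.mpr (dvd_mul_left ε c)
  · exact Ideal.span_singleton_le_span_singleton.mpr ⟨a, by rw [mul_comm, hab]⟩

lemma mem_pow_of_span_singleton_eq (hε : IsIdempotentElem ε) {y : R}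
    (hy : Ideal.span {y} = Ideal.span {ε}) {m : ℕ} (hm : 1 ≤ m) :
    y ∈ {z : R | eps (Ideal.span {z}) = Ideal.span {ε}} ^ m := by
  have hεε : eps (Ideal.span {ε}) = Ideal.span {ε} :=
    eps_eq_self (by simp [IsIdempotentElem, Ideal.span_singleton_mul_span_singleton, hε.eq])
  induction m, hm using Nat.le_induction with
  | base => rwa [pow_one, Set.mem_ofPred_eq, hy]
  | succ m _ ih =>
    rw [pow_succ, ← hε.mul_eq_self_of_span_singleton_eq hy, mul_comm ε y]
    exact Set.mul_mem_mul ih hεε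

/-- For idempotent `f`, `z ↦ f * z` is multiplicative. -/
lemma mul_mem_pow_of_mem_pow {f : R} (hf : IsIdempotentElem f) {s : Set R} {I : Ideal R}
    (hs : ∀ z ∈ s, f * z ∈ I) {m : ℕ} {y : R} (hy : y ∈ s ^ m) : f * y ∈ I ^ m := by
  induction m generalizing y with
  | zero => simp
  | succ m ih =>
    obtain ⟨a, ha, b, hb, rfl⟩ := Set.mem_mul.mp (pow_succ s m ▸ hy)
    rw [pow_succ, show f * (a * b) = (f * a) * (f * b) by rw [mul_mul_mul_comm, hf.eq]]
    exact Ideal.mul_mem_mul (ih ha) (hs b hb)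

end IsIdempotentElem

lemma IsArtinianRing.exists_isIdempotentElem_pow {R : Type*} [CommRing R] [IsArtinianRing R]
    (I : Ideal R) : ∃ N ≠ 0, IsIdempotentElem (I ^ N) := by
  obtain ⟨n, hn⟩ := IsArtinian.monotone_stabilizes (R := R) (M := R)
    ⟨fun n => OrderDual.toDual (I ^ n), fun _ _ h => Ideal.pow_le_pow_right h⟩
  refine ⟨n + 1, n.succ_ne_zero, ?_⟩
  have h1 : I ^ n = I ^ (n + 1) := hn (n + 1) n.le_succ
  have h2 : I ^ n = I ^ (n + 1 + (n + 1)) := hn (n + 1 + (n + 1)) (by omega)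
  rw [IsIdempotentElem, ← pow_add, ← h2, h1]

section Artinian

variable {R : Type*} [CommRing R] [IsArtinianRing R] {ε : R}

lemma isNilpotent_one_sub_mul_of_eps_eq (hε : IsIdempotentElem ε) {z : R}
    (hz : eps (Ideal.span {z}) = Ideal.span {ε}) : IsNilpotent ((1 - ε) * z) := by
  obtain ⟨N, hN, hidem⟩ := IsArtinianRing.exists_isIdempotentElem_pow (Ideal.span {z})
  have hzN : z ^ N ∈ Ideal.span {ε} := hz ▸ le_eps hidem (Ideal.pow_le_self hN)
    (Ideal.pow_mem_pow (Ideal.mem_span_singleton_self z) N)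
  refine ⟨N, ?_⟩
  rw [mul_pow, hε.one_sub.pow_eq hN, sub_mul, one_mul, hε.mem_span_singleton_iff.mp hzN,
    sub_self]

lemma IsArtinianRing.mul_eq_self_of_forall_mem_pow (hε : IsIdempotentElem ε) {y : R}
    (hy : ∀ m ≥ 1, y ∈ {z : R | eps (Ideal.span {z}) = Ideal.span {ε}} ^ m) :
    ε * y = y := by
  obtain ⟨K, hK⟩ := IsNoetherianRing.isNilpotent_nilradical R
  have hmem := hε.one_sub.mul_mem_pow_of_mem_pow
    (fun z hz => mem_nilradical.mpr (isNilpotent_one_sub_mul_of_eps_eq hε hz))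
    (hy (K + 1) (by omega))
  rw [pow_succ, hK, zero_mul, Ideal.zero_eq_bot, Ideal.mem_bot] at hmem
  linear_combination -hmem

end Artinian

theorem UniqueFactorizationMonoid.le_card_normalizedFactors_of_mem_pow {α : Type*}
    [CommMonoidWithZero α] [NormalizationMonoid α] [UniqueFactorizationMonoid α]
    {s : Set α} (hs : ∀ a ∈ s, ¬IsUnit a) {m : ℕ} {a : α} (ha : a ∈ s ^ m)
    (ha0 : a ≠ 0) :
    m ≤ Multiset.card (normalizedFactors a) := by
  induction m generalizing a with
  | zero => exact Nat.zero_le _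
  | succ m ih =>
    obtain ⟨b, hb, c, hc, rfl⟩ := Set.mem_mul.mp (pow_succ s m ▸ ha)
    have hc1 : 1 ≤ Multiset.card (normalizedFactors c) :=
      Multiset.card_pos.mpr ((normalizedFactors_pos c (right_ne_zero_of_mul ha0)).mpr
        (hs c hc)).ne'
    rw [normalizedFactors_mul (left_ne_zero_of_mul ha0) (right_ne_zero_of_mul ha0),
      Multiset.card_add]
    exact Nat.add_le_add (ih hb (left_ne_zero_of_mul ha0)) hc1

theorem IsDedekindDomain.eq_zero_of_forall_mem_pow {S : Type*} [CommRing S]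
    [IsDedekindDomain S] {s : Set S} (hs : ∀ z ∈ s, ¬IsUnit z) {y : S}
    (hy : ∀ m ≥ 1, y ∈ s ^ m) : y = 0 := by
  by_contra hy0
  let f := Submodule.spanSingleton S (A := S)
  have hfs : ∀ I ∈ f '' s, ¬IsUnit I := by
    rintro _ ⟨z, hz, rfl⟩ hu
    exact hs z hz (by simpa [f, Ideal.isUnit_iff, Ideal.span_singleton_eq_top] using hu)
  have hfy : f y ≠ 0 := by simpa [f] using hy0
  set n := Multiset.card (normalizedFactors (f y))
  have hmem : f y ∈ (f '' s) ^ (n + 1) :=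
    Set.image_pow f s (n + 1) ▸ Set.mem_image_of_mem f (hy (n + 1) (by omega))
  have := UniqueFactorizationMonoid.le_card_normalizedFactors_of_mem_pow hfs hmem hfy
  omega

lemma IsDedekindDomain.isArtinianRing_quotient {S : Type*} [CommRing S] [IsDedekindDomain S]
    {A : Ideal S} (hA : A ≠ ⊥) : IsArtinianRing (S ⧸ A) :=
  have : Ring.KrullDimLE 0 (S ⧸ A) := Ring.krullDimLE_zero_iff.mpr fun _ hJ =>
    Ideal.isMaximal_of_isIntegral_of_isMaximal_comap _ <|
      (hJ.comap (Ideal.Quotient.mk A)).isMaximal fun h => hA <| eq_bot_iff.mpr <|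
        h ▸ (Ideal.mk_ker (I := A)).symm.le.trans (Ideal.ker_le_comap _)
  IsNoetherianRing.isArtinianRing_of_krullDimLE_zero

section Quotient

variable {S : Type*} [CommRing S] [IsDedekindDomain S]

lemma mul_eq_self_of_forall_mem_pow_of_bot {ε y : S ⧸ (⊥ : Ideal S)}
    (hε : IsIdempotentElem ε)
    (hy : ∀ m ≥ 1, y ∈ {z | eps (Ideal.span {z}) = Ideal.span {ε}} ^ m) : ε * y = y := by
  rcases IsIdempotentElem.iff_eq_zero_or_one.mp hε with rfl | rfl
  · let ψ := RingEquiv.quotientBot S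
    have hs : ∀ z ∈ ψ '' {z | eps (Ideal.span {z}) = Ideal.span {0}}, ¬IsUnit z := by
      rintro _ ⟨z, hz, rfl⟩ hu
      have htop : Ideal.span {z} = ⊤ :=
        Ideal.span_singleton_eq_top.mpr ((isUnit_map_iff ψ z).mp hu)
      rw [Set.mem_ofPred_eq, htop, eps_eq_self (by simp [IsIdempotentElem])] at hz
      simp at hz
    have hψy : ψ y = 0 := IsDedekindDomain.eq_zero_of_forall_mem_pow hs fun m hm =>
      Set.image_pow ψ _ m ▸ Set.mem_image_of_mem ψ (hy m hm)
    rw [zero_mul, (map_eq_zero_iff ψ ψ.injective).mp hψy]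
  · exact one_mul y

theorem mul_eq_self_of_forall_mem_pow {A : Ideal S} {ε y : S ⧸ A} (hε : IsIdempotentElem ε)
    (hy : ∀ m ≥ 1, y ∈ {z | eps (Ideal.span {z}) = Ideal.span {ε}} ^ m) : ε * y = y := by
  rcases eq_or_ne A ⊥ with rfl | hA
  · exact mul_eq_self_of_forall_mem_pow_of_bot hε hy
  · have := IsDedekindDomain.isArtinianRing_quotient hA
    exact IsArtinianRing.mul_eq_self_of_forall_mem_pow hε hy

end Quotient

/-- Let `S` be a Dedekind domain, `A` an ideal of `S`, `R = S/A`, and let `e` be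
an idempotent ideal of `R` with `e = (x)`. For `R_e = {y ∈ R | ε((y)) = e}` one
has `⋂_{m ≥ 1} R_e^m = {y | (y) = e}`, and this set is a group under the
multiplication of `R`; hence each `R_e` is a stratified extension of a group and
the multiplicative semigroup of `R` is a semilattice of stratified extensions of
groups. -/
theorem base_Re_eq_and_group {S : Type*} [CommRing S] [IsDedekindDomain S] (A : Ideal S)
    (e : Ideal (S ⧸ A)) (he : e * e = e) (x : S ⧸ A) (hx : e = Ideal.span {x}) :
    (⋂ m ∈ Set.Ici 1,
        ({y : S ⧸ A | eps (Ideal.span {y}) = e} : Set (S ⧸ A)) ^ m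
      = {y : S ⧸ A | Ideal.span {y} = e}) ∧
    (∀ a ∈ {y : S ⧸ A | Ideal.span {y} = e}, ∀ b ∈ {y : S ⧸ A | Ideal.span {y} = e},
      a * b ∈ {y : S ⧸ A | Ideal.span {y} = e}) ∧
    (∃ i ∈ {y : S ⧸ A | Ideal.span {y} = e},
      (∀ a ∈ {y : S ⧸ A | Ideal.span {y} = e}, i * a = a) ∧
      (∀ a ∈ {y : S ⧸ A | Ideal.span {y} = e},
        ∃ b ∈ {y : S ⧸ A | Ideal.span {y} = e}, a * b = i)) := by
  obtain ⟨ε, hε, rfl⟩ : ∃ ε : S ⧸ A, IsIdempotentElem ε ∧ e = Ideal.span {ε} := by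
    simpa using (e.isIdempotentElem_iff_of_fg (hx ▸ Submodule.fg_span_singleton x)).mp he
  refine ⟨Set.ext fun y => ?_, fun a ha b hb => ?_, ε, rfl,
    fun a ha => hε.mul_eq_self_of_span_singleton_eq ha,
    fun a ha => hε.exists_mul_eq_of_span_singleton_eq ha⟩
  · rw [Set.mem_iInter₂, Set.mem_ofPred_eq]
    refine ⟨fun hy => le_antisymm ?_ ?_, fun hy m hm => hε.mem_pow_of_span_singleton_eq hy hm⟩
    · exact Ideal.span_singleton_le_iff_mem _ |>.mpr
        (hε.mem_span_singleton_iff.mpr (mul_eq_self_of_forall_mem_pow hε hy))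
    · have hy1 : eps (Ideal.span {y}) = Ideal.span {ε} := by simpa using hy 1 Set.self_mem_Ici
      exact hy1 ▸ eps_le (Ideal.span {y})
  · rw [Set.mem_ofPred_eq, ← Ideal.span_singleton_mul_span_singleton, ha, hb, he]
end
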